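/- Let k ≥ 2 be an integer and C > 0. There exists a constant C' > 0 depending only on k and C such that for every convex element K = K(a,b,ã,b̃) satisfying with constant C either both conditions (D1) and (D2), or all three conditions (Δ1), (D2) and (D3), and for all integers 1 ≤ i,j ≤ k−1, with M_{ij} = F_K(j/k, i/k), M_{i0} = (0, b·i/k) and M_{0j} = (a·j/k, 0): (a) a/C' ≤ ‖M_{ij} − M_{i0}‖ ≤ C'·a, b/C' ≤ ‖M_{ij} − M_{0j}‖ ≤ C'·b, and h/C' ≤ ‖M_{i0} − M_{0j}‖ ≤ C'·h where h = diam K; (b) the angle α_{ij} at M_{i0} between the vectors M_{ij} − M_{i0} and M_{0j} − M_{i0} satisfies sin α_{ij} ≥ 1/C'. -/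

import Mathlib

noncomputable section

/-- The Euclidean plane. -/
abbrev E2 := EuclideanSpace ℝ (Fin 2)

/-- The point (x, y) of the Euclidean plane. -/
def pt2 (x y : ℝ) : E2 := WithLp.toLp 2 ![x, y]

/-- The quadrilateral `K(a,b,ta,tb)` with vertices `(0,0), (a,0), (ta,tb), (0,b)`. -/
def quadK (a b ta tb : ℝ) : Set E2 :=
  convexHull ℝ {pt2 0 0, pt2 a 0, pt2 ta tb, pt2 0 b}

/-- The sine of the interior angle α at `V4 = (0,b)` of the triangle with vertices
`V2 = (a,0)`, `V3 = (ta,tb)`, `V4 = (0,b)`. -/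
def sinAlpha (a b ta tb : ℝ) : ℝ :=
  Real.sin (EuclideanGeometry.angle (pt2 a 0) (pt2 0 b) (pt2 ta tb))

/-- The bilinear map `F_K` of `K(a,b,ta,tb)`, valued in the Euclidean plane. -/
def FKpt (a b ta tb x y : ℝ) : E2 :=
  pt2 (a * x * (1 - y) + ta * x * y) (b * y * (1 - x) + tb * x * y)

/-! Under either set of hypotheses the element is shape regular in the weak sense of
`ShapeRegular`: `a ≲ b`, `ta ≲ a`, `tb ≲ b`, `|b - tb| ≲ a`, `|a - ta| ≲ b`; under (D1), (D2)
this comes from `sin α · ‖V₂ - V₄‖ · ‖V₃ - V₄‖ = b ta + a tb - a b`.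
For `x = j/k`, `y = i/k ∈ [1/k, 1 - 1/k]` one has
`M_{ij} - M_{i0} = (x (a (1 - y) + ta y), x y (tb - b))`, so the side lengths can be read off
coordinatewise, and those of `M_{ij} - M_{0j}` follow by exchanging the axes. The cross product of the two sides at `M_{i0}` is
`x y (a b - a x (b - tb) - b y (a - ta))`; the bracket is affine in `(x, y)`, so on
`[0, 1 - 1/k]²` it is at least its smallest corner value, and convexity of `K` makes every
corner value at least `a b / k`. -/

open InnerProductGeometry Set

lemma pt2_sub (x y x' y' : ℝ) : pt2 x y - pt2 x' y' = pt2 (x - x') (y - y') := by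
  ext i; fin_cases i <;> simp [pt2]

lemma norm_pt2 (x y : ℝ) : ‖pt2 x y‖ = √(x ^ 2 + y ^ 2) := by
  simp [EuclideanSpace.norm_eq, pt2, Fin.sum_univ_two, sq_abs]

lemma norm_pt2_comm (x y : ℝ) : ‖pt2 x y‖ = ‖pt2 y x‖ := by
  rw [norm_pt2, norm_pt2, add_comm]

lemma abs_le_norm_pt2 (x y : ℝ) : |x| ≤ ‖pt2 x y‖ := by
  rw [norm_pt2]
  exact Real.abs_le_sqrt (le_add_of_nonneg_right (sq_nonneg y))

lemma norm_pt2_le (x y : ℝ) : ‖pt2 x y‖ ≤ |x| + |y| := by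
  rw [norm_pt2, Real.sqrt_le_left (by positivity)]
  nlinarith [sq_abs x, sq_abs y, abs_nonneg x, abs_nonneg y]

lemma inner_pt2 (x y x' y' : ℝ) : inner ℝ (pt2 x y) (pt2 x' y') = x * x' + y * y' := by
  simp only [pt2, PiLp.inner_apply, RCLike.inner_apply, Real.ringHom_apply, Fin.sum_univ_two,
    Matrix.cons_val_zero, Matrix.cons_val_one]
  ring

lemma sin_angle_pt2_mul_norm_mul_norm (x y x' y' : ℝ) :
    Real.sin (angle (pt2 x y) (pt2 x' y')) * (‖pt2 x y‖ * ‖pt2 x' y'‖) = |x * y' - y * x'| := by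
  rw [sin_angle_mul_norm_mul_norm, inner_pt2, inner_pt2, inner_pt2, ← Real.sqrt_sq_eq_abs]
  ring_nf

lemma one_lt_div_add_div_iff {a b ta tb : ℝ} (ha : 0 < a) (hb : 0 < b) :
    1 < ta / a + tb / b ↔ a * b < b * ta + a * tb := by
  rw [div_add_div _ _ ha.ne' hb.ne', one_lt_div (mul_pos ha hb)]
  ring_nf

lemma le_diam_quadK {a b : ℝ} (ta tb : ℝ) (ha : 0 ≤ a) (hb : 0 ≤ b) :
    a ≤ Metric.diam (quadK a b ta tb) ∧ b ≤ Metric.diam (quadK a b ta tb) := by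
  have hbdd : Bornology.IsBounded (quadK a b ta tb) :=
    ((toFinite _).isCompact_convexHull ℝ).isBounded
  have mem : ∀ p ∈ ({pt2 0 0, pt2 a 0, pt2 ta tb, pt2 0 b} : Set E2), p ∈ quadK a b ta tb :=
    fun p hp ↦ subset_convexHull ℝ _ hp
  constructor
  · have h := Metric.dist_le_diam_of_mem hbdd (mem (pt2 0 0) (by simp)) (mem (pt2 a 0) (by simp))
    simpa [dist_eq_norm, pt2_sub, norm_pt2, Real.sqrt_sq ha] using h
  · have h := Metric.dist_le_diam_of_mem hbdd (mem (pt2 0 0) (by simp)) (mem (pt2 0 b) (by simp))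
    simpa [dist_eq_norm, pt2_sub, norm_pt2, Real.sqrt_sq hb] using h

lemma diam_quadK_le {a b ta tb : ℝ} (ha : 0 ≤ a) (hb : 0 ≤ b) (hta : 0 ≤ ta) (htb : 0 ≤ tb) :
    Metric.diam (quadK a b ta tb) ≤ 2 * (a + b + ta + tb) := by
  have hball : quadK a b ta tb ⊆ Metric.closedBall 0 (a + b + ta + tb) := by
    refine convexHull_min ?_ (convex_closedBall 0 _)
    simp only [insert_subset_iff, singleton_subset_iff, Metric.mem_closedBall, dist_zero_right]
    refine ⟨?_, ?_, ?_, ?_⟩ <;> refine (norm_pt2_le _ _).trans ?_ <;>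
      simp only [abs_zero, abs_of_nonneg ha, abs_of_nonneg hb, abs_of_nonneg hta,
        abs_of_nonneg htb] <;> linarith
  calc Metric.diam (quadK a b ta tb)
      ≤ Metric.diam (Metric.closedBall (0 : E2) (a + b + ta + tb)) :=
        Metric.diam_mono hball Metric.isBounded_closedBall
    _ ≤ 2 * (a + b + ta + tb) := Metric.diam_closedBall (by positivity)

lemma sinAlpha_mul_norm_mul_norm (a b ta tb : ℝ) :
    sinAlpha a b ta tb * (‖pt2 a (-b)‖ * ‖pt2 ta (tb - b)‖) = |b * ta + a * tb - a * b| := by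
  rw [sinAlpha, EuclideanGeometry.angle, vsub_eq_sub, vsub_eq_sub, pt2_sub, pt2_sub,
    sub_zero, zero_sub, sub_zero, sin_angle_pt2_mul_norm_mul_norm]
  ring_nf

structure ShapeRegular (c a b ta tb : ℝ) : Prop where
  a_le : a ≤ c * b
  ta_le : ta ≤ c * a
  tb_le : tb ≤ c * b
  abs_sub_tb_le : |b - tb| ≤ c * a
  abs_sub_ta_le : |a - ta| ≤ c * b

lemma ShapeRegular.mono {c c' a b ta tb : ℝ} (h : ShapeRegular c a b ta tb) (hc : c ≤ c')
    (ha : 0 ≤ a) (hb : 0 ≤ b) : ShapeRegular c' a b ta tb where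
  a_le := h.a_le.trans (mul_le_mul_of_nonneg_right hc hb)
  ta_le := h.ta_le.trans (mul_le_mul_of_nonneg_right hc ha)
  tb_le := h.tb_le.trans (mul_le_mul_of_nonneg_right hc hb)
  abs_sub_tb_le := h.abs_sub_tb_le.trans (mul_le_mul_of_nonneg_right hc ha)
  abs_sub_ta_le := h.abs_sub_ta_le.trans (mul_le_mul_of_nonneg_right hc hb)

lemma ShapeRegular.pos {c a b ta tb : ℝ} (h : ShapeRegular c a b ta tb) (ha : 0 < a)
    (hta : 0 < ta) : 0 < c :=
  pos_of_mul_pos_left (hta.trans_le h.ta_le) ha.le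

lemma shapeRegular_of_D1_D2 {C a b ta tb : ℝ} (hC : 0 < C) (ha : 0 < a) (hb : 0 < b)
    (hta : 0 < ta) (hconv : a * b < b * ta + a * tb) (hta_le : ta ≤ a) (htb_le : tb ≤ b)
    (hsin : 1 / C ≤ sinAlpha a b ta tb) : ShapeRegular (max 1 C) a b ta tb := by
  set N := ‖pt2 a (-b)‖ * ‖pt2 ta (tb - b)‖
  have hN : N ≤ C * (b * ta + a * tb - a * b) := by
    have h := mul_le_mul_of_nonneg_right hsin (by positivity : 0 ≤ N)
    rw [sinAlpha_mul_norm_mul_norm, abs_of_pos (by linarith), one_div_mul_eq_div,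
      div_le_iff₀ hC] at h
    linarith
  have hv2a : a ≤ ‖pt2 a (-b)‖ := by simpa [abs_of_pos ha] using abs_le_norm_pt2 a (-b)
  have hv2b : b ≤ ‖pt2 a (-b)‖ := by
    simpa [abs_of_pos hb, norm_pt2_comm a] using abs_le_norm_pt2 (-b) a
  have hv3a : ta ≤ ‖pt2 ta (tb - b)‖ := by simpa [abs_of_pos hta] using abs_le_norm_pt2 ta (tb - b)
  have hv3b : b - tb ≤ ‖pt2 ta (tb - b)‖ := by
    rw [norm_pt2_comm]
    exact (neg_sub tb b ▸ neg_le_abs (tb - b)).trans (abs_le_norm_pt2 _ _)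
  have hab : a ≤ C * b := by
    refine le_of_mul_le_mul_right ?_ hta
    calc a * ta ≤ N := mul_le_mul hv2a hv3a hta.le (norm_nonneg _)
      _ ≤ C * (b * ta + a * tb - a * b) := hN
      _ ≤ C * b * ta := by nlinarith [mul_le_mul_of_nonneg_left htb_le ha.le]
  have hbtb : b - tb ≤ C * a := by
    refine le_of_mul_le_mul_right ?_ hb
    calc (b - tb) * b ≤ N := by
          rw [mul_comm]; exact mul_le_mul hv2b hv3b (by linarith) (norm_nonneg _)
      _ ≤ C * (b * ta + a * tb - a * b) := hN
      _ ≤ C * a * b := by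
          nlinarith [mul_le_mul_of_nonneg_left htb_le ha.le, mul_le_mul_of_nonneg_left hta_le hb.le]
  have h1 : 1 ≤ max 1 C := le_max_left 1 C
  have hCm : C ≤ max 1 C := le_max_right 1 C
  refine ⟨?_, ?_, ?_, ?_, ?_⟩
  · nlinarith
  · nlinarith
  · nlinarith
  · rw [abs_of_nonneg (by linarith)]; nlinarith
  · rw [abs_of_nonneg (by linarith)]; nlinarith

lemma shapeRegular_of_Δ1_D3 {C a b ta tb : ℝ} (ha : 0 < a) (hb : 0 < b) (hta : 0 < ta)
    (htb : 0 < tb) (hta_le : ta / a ≤ C) (htb_le : tb / b ≤ C) (hab : a ≤ C * b)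
    (hba : b ≤ C * a) : ShapeRegular (max 1 C ^ 2) a b ta tb := by
  rw [div_le_iff₀ ha] at hta_le
  rw [div_le_iff₀ hb] at htb_le
  have h1 : 1 ≤ max 1 C := le_max_left 1 C
  have hCm : C ≤ max 1 C := le_max_right 1 C
  have hC : 0 < C := by nlinarith
  have hCm2 : C ≤ max 1 C ^ 2 := by nlinarith
  have hCC : C * C ≤ max 1 C ^ 2 := by nlinarith
  refine ⟨?_, ?_, ?_, abs_sub_le_iff.2 ⟨?_, ?_⟩, abs_sub_le_iff.2 ⟨?_, ?_⟩⟩ <;> nlinarith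

lemma shapeRegular_of_cases {C a b ta tb : ℝ} (hC : 0 < C) (ha : 0 < a) (hb : 0 < b)
    (hta : 0 < ta) (htb : 0 < tb) (hconv : a * b < b * ta + a * tb)
    (hcase : (ta ≤ a ∧ tb ≤ b ∧ 1 / C ≤ sinAlpha a b ta tb) ∨
      (ta / a ≤ C ∧ tb / b ≤ C ∧ 1 / C ≤ sinAlpha a b ta tb ∧ a ≤ C * b ∧ b ≤ C * a)) :
    ShapeRegular (max 1 C ^ 2) a b ta tb := by
  rcases hcase with ⟨hta_le, htb_le, hsin⟩ | ⟨hta_le, htb_le, -, hab, hba⟩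
  · exact (shapeRegular_of_D1_D2 hC ha hb hta hconv hta_le htb_le hsin).mono
      (le_self_pow₀ (le_max_left 1 C) two_ne_zero) ha.le hb.le
  · exact shapeRegular_of_Δ1_D3 ha hb hta htb hta_le htb_le hab hba

lemma mul_add_mul_le_mul {x y t p q s : ℝ} (hx : x ∈ Icc 0 t) (hy : y ∈ Icc 0 t) (hs : 0 ≤ s)
    (hp : p ≤ s) (hq : q ≤ s) (hpq : p + q ≤ s) : x * p + y * q ≤ t * s := by
  obtain ⟨hx0, hxt⟩ := hx
  obtain ⟨hy0, hyt⟩ := hy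
  rcases le_total p 0 with hp0 | hp0 <;> rcases le_total q 0 with hq0 | hq0 <;>
    nlinarith [mul_nonneg hx0 hy0]

section Node

variable {a b ta tb x y δ : ℝ}

lemma FKpt_sub_pt2_zero_mul (a b ta tb x y : ℝ) :
    FKpt a b ta tb x y - pt2 0 (b * y) = pt2 (x * (a * (1 - y) + ta * y)) (x * y * (tb - b)) := by
  rw [FKpt, pt2_sub]; congr 1 <;> ring

lemma norm_FKpt_sub_pt2_mul_zero (a b ta tb x y : ℝ) :
    ‖FKpt a b ta tb x y - pt2 (a * x) 0‖ = ‖FKpt b a tb ta y x - pt2 0 (a * x)‖ := by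
  rw [FKpt_sub_pt2_zero_mul, norm_pt2_comm, FKpt, pt2_sub]; congr 2 <;> ring

lemma sq_mul_le_norm_FKpt_sub_pt2_zero_mul (ha : 0 ≤ a) (hta : 0 ≤ ta) (hδ : 0 ≤ δ)
    (hx : δ ≤ x) (hy : y ∈ Icc 0 (1 - δ)) :
    δ ^ 2 * a ≤ ‖FKpt a b ta tb x y - pt2 0 (b * y)‖ := by
  rw [FKpt_sub_pt2_zero_mul]
  refine le_trans ?_ ((le_abs_self _).trans (abs_le_norm_pt2 _ _))
  have h : δ * a ≤ a * (1 - y) + ta * y := by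
    nlinarith [mul_nonneg hta hy.1, mul_le_mul_of_nonneg_right (le_sub_comm.1 hy.2) ha]
  calc δ ^ 2 * a = δ * (δ * a) := by ring
    _ ≤ x * (a * (1 - y) + ta * y) := mul_le_mul hx h (by positivity) (hδ.trans hx)

lemma norm_FKpt_sub_pt2_zero_mul_le {c : ℝ} (ha : 0 ≤ a) (hta : 0 ≤ ta) (hx : x ∈ Icc 0 1)
    (hy : y ∈ Icc 0 1) (hta_le : ta ≤ c * a) (htb : |b - tb| ≤ c * a) :
    ‖FKpt a b ta tb x y - pt2 0 (b * y)‖ ≤ (1 + 2 * c) * a := by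
  obtain ⟨hx0, hx1⟩ := hx
  obtain ⟨hy0, hy1⟩ := hy
  have h1 : |x * (a * (1 - y) + ta * y)| ≤ a + ta := by
    have hs : 0 ≤ a * (1 - y) + ta * y := by nlinarith [mul_nonneg hta hy0]
    rw [abs_of_nonneg (mul_nonneg hx0 hs)]
    nlinarith [mul_le_of_le_one_left hs hx1, mul_nonneg ha hy0, mul_le_of_le_one_right hta hy1]
  have h2 : |x * y * (tb - b)| ≤ |b - tb| := by
    rw [abs_mul, abs_sub_comm tb b, abs_of_nonneg (mul_nonneg hx0 hy0)]
    exact mul_le_of_le_one_left (abs_nonneg _) (mul_le_one₀ hx1 hy0 hy1)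
  rw [FKpt_sub_pt2_zero_mul]
  linarith [norm_pt2_le (x * (a * (1 - y) + ta * y)) (x * y * (tb - b))]

lemma pt2_zero_mul_sub_pt2_mul_zero (a b x y : ℝ) :
    pt2 0 (b * y) - pt2 (a * x) 0 = pt2 (-(a * x)) (b * y) := by
  rw [pt2_sub, zero_sub, sub_zero]

lemma mul_add_le_two_mul_norm_pt2_zero_mul_sub (ha : 0 ≤ a) (hb : 0 ≤ b) (hx : δ ≤ x)
    (hy : δ ≤ y) : δ * (a + b) ≤ 2 * ‖pt2 0 (b * y) - pt2 (a * x) 0‖ := by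
  rw [pt2_zero_mul_sub_pt2_mul_zero]
  have hax : a * x ≤ ‖pt2 (-(a * x)) (b * y)‖ := by
    have h := abs_le_norm_pt2 (-(a * x)) (b * y)
    rw [abs_neg] at h
    exact (le_abs_self _).trans h
  have hby : b * y ≤ ‖pt2 (-(a * x)) (b * y)‖ := by
    rw [norm_pt2_comm]
    exact (le_abs_self _).trans (abs_le_norm_pt2 _ _)
  nlinarith [mul_le_mul_of_nonneg_left hx ha, mul_le_mul_of_nonneg_left hy hb]

lemma norm_pt2_zero_mul_sub_le (ha : 0 ≤ a) (hb : 0 ≤ b) (hx : x ∈ Icc 0 1) (hy : y ∈ Icc 0 1) :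
    ‖pt2 0 (b * y) - pt2 (a * x) 0‖ ≤ a + b := by
  rw [pt2_zero_mul_sub_pt2_mul_zero]
  refine (norm_pt2_le _ _).trans ?_
  rw [abs_neg, abs_of_nonneg (mul_nonneg ha hx.1), abs_of_nonneg (mul_nonneg hb hy.1)]
  nlinarith [mul_le_of_le_one_right ha hx.2, mul_le_of_le_one_right hb hy.2]

lemma sin_angle_FKpt_sub_mul_norm_mul_norm (a b ta tb x y : ℝ) :
    Real.sin (angle (FKpt a b ta tb x y - pt2 0 (b * y)) (pt2 (a * x) 0 - pt2 0 (b * y))) *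
        (‖FKpt a b ta tb x y - pt2 0 (b * y)‖ * ‖pt2 (a * x) 0 - pt2 0 (b * y)‖) =
      |x * y * (a * b - a * x * (b - tb) - b * y * (a - ta))| := by
  rw [FKpt_sub_pt2_zero_mul, pt2_sub, sin_angle_pt2_mul_norm_mul_norm, ← abs_neg]
  ring_nf

lemma mul_le_cross_FKpt (ha : 0 < a) (hb : 0 < b) (hta : 0 < ta) (htb : 0 < tb)
    (hconv : a * b < b * ta + a * tb) (hx : x ∈ Icc 0 (1 - δ)) (hy : y ∈ Icc 0 (1 - δ)) :
    δ * (a * b) ≤ a * b - a * x * (b - tb) - b * y * (a - ta) := by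
  have h := mul_add_mul_le_mul hx hy (mul_pos ha hb).le (p := a * (b - tb)) (q := b * (a - ta))
    (by nlinarith) (by nlinarith) (by linarith)
  linarith

lemma div_le_sin_angle_FKpt_sub {c : ℝ} (hreg : ShapeRegular c a b ta tb) (ha : 0 < a)
    (hb : 0 < b) (hta : 0 < ta) (htb : 0 < tb) (hconv : a * b < b * ta + a * tb) (hδ : 0 < δ)
    (hx : x ∈ Icc δ (1 - δ)) (hy : y ∈ Icc δ (1 - δ)) :
    δ ^ 3 / ((1 + 2 * c) * (1 + c)) ≤
      Real.sin (angle (FKpt a b ta tb x y - pt2 0 (b * y)) (pt2 (a * x) 0 - pt2 0 (b * y))) := by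
  set s := Real.sin (angle (FKpt a b ta tb x y - pt2 0 (b * y)) (pt2 (a * x) 0 - pt2 0 (b * y)))
  have hc := hreg.pos ha hta
  have hx01 : x ∈ Icc 0 1 := Icc_subset_Icc hδ.le (by linarith) hx
  have hy01 : y ∈ Icc 0 1 := Icc_subset_Icc hδ.le (by linarith) hy
  have hu := norm_FKpt_sub_pt2_zero_mul_le ha.le hta.le hx01 hy01 hreg.ta_le hreg.abs_sub_tb_le
  have hw : ‖pt2 (a * x) 0 - pt2 0 (b * y)‖ ≤ (1 + c) * b := by
    rw [norm_sub_rev]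
    linarith [norm_pt2_zero_mul_sub_le ha.le hb.le hx01 hy01, hreg.a_le]
  have hT := mul_le_cross_FKpt ha hb hta htb hconv (Icc_subset_Icc hδ.le le_rfl hx)
    (Icc_subset_Icc hδ.le le_rfl hy)
  have hcross : δ ^ 3 * (a * b) ≤ s * ((1 + 2 * c) * a * ((1 + c) * b)) := by
    calc δ ^ 3 * (a * b) = δ * δ * (δ * (a * b)) := by ring
      _ ≤ x * y * (a * b - a * x * (b - tb) - b * y * (a - ta)) :=
          mul_le_mul (mul_le_mul hx.1 hy.1 hδ.le (by linarith [hx.1])) hT (by positivity)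
            (mul_nonneg (by linarith [hx.1]) (by linarith [hy.1]))
      _ ≤ s * (‖FKpt a b ta tb x y - pt2 0 (b * y)‖ * ‖pt2 (a * x) 0 - pt2 0 (b * y)‖) := by
          rw [sin_angle_FKpt_sub_mul_norm_mul_norm]; exact le_abs_self _
      _ ≤ s * ((1 + 2 * c) * a * ((1 + c) * b)) :=
          mul_le_mul_of_nonneg_left (mul_le_mul hu hw (norm_nonneg _) (by positivity))
            (sin_angle_nonneg _ _)
  rw [div_le_iff₀ (by positivity)]
  refine le_of_mul_le_mul_right ?_ (mul_pos ha hb)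
  linarith

lemma diam_quadK_le_norm_pt2_zero_mul_sub {c : ℝ} (hreg : ShapeRegular c a b ta tb) (ha : 0 < a)
    (hb : 0 < b) (hta : 0 < ta) (htb : 0 < tb) (hδ : 0 < δ) (hx : x ∈ Icc δ 1)
    (hy : y ∈ Icc δ 1) :
    δ / (4 * (1 + c)) * Metric.diam (quadK a b ta tb) ≤ ‖pt2 0 (b * y) - pt2 (a * x) 0‖ ∧
      ‖pt2 0 (b * y) - pt2 (a * x) 0‖ ≤ 2 * Metric.diam (quadK a b ta tb) := by
  have hc := hreg.pos ha hta
  obtain ⟨hda, hdb⟩ := le_diam_quadK ta tb ha.le hb.le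
  have hlow := mul_add_le_two_mul_norm_pt2_zero_mul_sub ha.le hb.le hx.1 hy.1
  have hup := norm_pt2_zero_mul_sub_le ha.le hb.le (Icc_subset_Icc hδ.le le_rfl hx)
    (Icc_subset_Icc hδ.le le_rfl hy)
  refine ⟨?_, by linarith⟩
  calc δ / (4 * (1 + c)) * Metric.diam (quadK a b ta tb)
      ≤ δ / (4 * (1 + c)) * (2 * ((1 + c) * (a + b))) := by
        refine mul_le_mul_of_nonneg_left ?_ (by positivity)
        linarith [diam_quadK_le ha.le hb.le hta.le htb.le, hreg.ta_le, hreg.tb_le]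
    _ = δ * (a + b) / 2 := by field_simp; ring
    _ ≤ ‖pt2 0 (b * y) - pt2 (a * x) 0‖ := by linarith

end Node

def Comparable (c X Y : ℝ) : Prop := X / c ≤ Y ∧ Y ≤ c * X

lemma Comparable.of_le {c l u X Y : ℝ} (hX : 0 ≤ X) (hl : l * X ≤ Y) (hu : Y ≤ u * X)
    (hlc : c⁻¹ ≤ l) (huc : u ≤ c) : Comparable c X Y := by
  constructor
  · rw [div_eq_inv_mul]
    exact (mul_le_mul_of_nonneg_right hlc hX).trans hl
  · exact hu.trans (mul_le_mul_of_nonneg_right huc hX)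

def nodeConst (c δ : ℝ) : ℝ := (1 + 2 * c) * (1 + c) / δ ^ 3

lemma nodeConst_pos {c δ : ℝ} (hc : 0 ≤ c) (hδ : 0 < δ) : 0 < nodeConst c δ := by
  unfold nodeConst
  positivity

lemma nodeConst_bounds {c δ : ℝ} (hc : 0 ≤ c) (hδ : 0 < δ) (hδ2 : δ ≤ 1 / 2) :
    (nodeConst c δ)⁻¹ = δ ^ 3 / ((1 + 2 * c) * (1 + c)) ∧
      (nodeConst c δ)⁻¹ ≤ δ ^ 2 ∧ (nodeConst c δ)⁻¹ ≤ δ / (4 * (1 + c)) ∧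
      1 + 2 * c ≤ nodeConst c δ ∧ 2 ≤ nodeConst c δ := by
  have hδ3 : δ ^ 3 ≤ 1 / 8 := by
    calc δ ^ 3 ≤ (1 / 2) ^ 3 := by gcongr
      _ = 1 / 8 := by norm_num
  have hP : 1 + 2 * c ≤ (1 + 2 * c) * (1 + c) := by nlinarith
  have hP' : 1 + c ≤ (1 + 2 * c) * (1 + c) := by nlinarith
  have hinv : (nodeConst c δ)⁻¹ = δ ^ 3 / ((1 + 2 * c) * (1 + c)) := by rw [nodeConst, inv_div]
  refine ⟨hinv, ?_, ?_, ?_, ?_⟩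
  · rw [hinv, div_le_iff₀ (by positivity)]
    nlinarith [pow_pos hδ 2]
  · have h4 : 4 * δ ^ 2 ≤ 1 := by nlinarith
    rw [hinv, div_le_div_iff₀ (by positivity) (by positivity)]
    nlinarith [mul_le_mul_of_nonneg_left h4 (by positivity : 0 ≤ δ * (1 + c)),
      mul_le_mul_of_nonneg_left hP' hδ.le]
  · rw [nodeConst, le_div_iff₀ (by positivity)]
    nlinarith
  · rw [nodeConst, le_div_iff₀ (by positivity)]
    nlinarith

lemma interior_node_bounds {c a b ta tb x y δ : ℝ} (hreg : ShapeRegular c a b ta tb) (ha : 0 < a)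
    (hb : 0 < b) (hta : 0 < ta) (htb : 0 < tb) (hconv : a * b < b * ta + a * tb) (hδ : 0 < δ)
    (hx : x ∈ Icc δ (1 - δ)) (hy : y ∈ Icc δ (1 - δ)) :
    Comparable (nodeConst c δ) a ‖FKpt a b ta tb x y - pt2 0 (b * y)‖ ∧
      Comparable (nodeConst c δ) b ‖FKpt a b ta tb x y - pt2 (a * x) 0‖ ∧
      Comparable (nodeConst c δ) (Metric.diam (quadK a b ta tb))
        ‖pt2 0 (b * y) - pt2 (a * x) 0‖ ∧
      1 / nodeConst c δ ≤
        Real.sin (angle (FKpt a b ta tb x y - pt2 0 (b * y)) (pt2 (a * x) 0 - pt2 0 (b * y))) := by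
  obtain ⟨hinv, hsq, hdiam, hlin, htwo⟩ :=
    nodeConst_bounds (hreg.pos ha hta).le hδ (by linarith [hx.1, hx.2])
  have hx0 : x ∈ Icc 0 (1 - δ) := Icc_subset_Icc hδ.le le_rfl hx
  have hy0 : y ∈ Icc 0 (1 - δ) := Icc_subset_Icc hδ.le le_rfl hy
  have hx01 : x ∈ Icc 0 1 := Icc_subset_Icc hδ.le (by linarith) hx
  have hy01 : y ∈ Icc 0 1 := Icc_subset_Icc hδ.le (by linarith) hy
  obtain ⟨hdlow, hdup⟩ := diam_quadK_le_norm_pt2_zero_mul_sub hreg ha hb hta htb hδ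
    (Icc_subset_Icc le_rfl (by linarith) hx) (Icc_subset_Icc le_rfl (by linarith) hy)
  refine ⟨Comparable.of_le ha.le (sq_mul_le_norm_FKpt_sub_pt2_zero_mul ha.le hta.le hδ.le hx.1 hy0)
      (norm_FKpt_sub_pt2_zero_mul_le ha.le hta.le hx01 hy01 hreg.ta_le hreg.abs_sub_tb_le)
      hsq hlin, ?_, Comparable.of_le Metric.diam_nonneg hdlow hdup hdiam htwo, ?_⟩
  · rw [norm_FKpt_sub_pt2_mul_zero]
    exact Comparable.of_le hb.le (sq_mul_le_norm_FKpt_sub_pt2_zero_mul hb.le htb.le hδ.le hy.1 hx0)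
      (norm_FKpt_sub_pt2_zero_mul_le hb.le htb.le hy01 hx01 hreg.tb_le hreg.abs_sub_ta_le)
      hsq hlin
  · rw [one_div, hinv]
    exact div_le_sin_angle_FKpt_sub hreg ha hb hta htb hconv hδ hx hy

lemma natCast_div_mem_Icc {j k : ℕ} (hj : 1 ≤ j) (hjk : j ≤ k - 1) :
    (j : ℝ) / k ∈ Icc (1 / (k : ℝ)) (1 - 1 / k) := by
  have hk : (0 : ℝ) < k := by exact_mod_cast (by omega : 0 < k)
  constructor
  · gcongr
    exact_mod_cast hj
  · rw [le_sub_iff_add_le, ← add_div, div_le_one hk]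
    exact_mod_cast (by omega : j + 1 ≤ k)

/-- Geometry of the triangles attached to interior interpolation nodes: for elements
under [(D1),(D2)] or [(Δ1),(D2),(D3)] with constant `C`, the node `M_{ij} = F_K(j/k,i/k)`
satisfies `‖M_{ij}−M_{i0}‖ ∼ a`, `‖M_{ij}−M_{0j}‖ ∼ b`, `‖M_{i0}−M_{0j}‖ ∼ h`, and the
angle `α_{ij}` at `M_{i0}` between `M_{ij}−M_{i0}` and `M_{0j}−M_{i0}` has
`sin α_{ij} ≥ 1/C'`. -/
theorem interior_node_triangles (k : ℕ) (hk : 2 ≤ k) (C : ℝ) (hC : 0 < C) :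
    ∃ C' : ℝ, 0 < C' ∧
      ∀ a b ta tb : ℝ, 0 < a → 0 < b → 0 < ta → 0 < tb →
        1 < ta / a + tb / b →
        ((ta ≤ a ∧ tb ≤ b ∧ 1 / C ≤ sinAlpha a b ta tb) ∨
          (ta / a ≤ C ∧ tb / b ≤ C ∧ 1 / C ≤ sinAlpha a b ta tb ∧
            a ≤ C * b ∧ b ≤ C * a)) →
        ∀ i j : ℕ, 1 ≤ i → i ≤ k - 1 → 1 ≤ j → j ≤ k - 1 →
          (a / C' ≤ ‖FKpt a b ta tb ((j:ℝ)/k) ((i:ℝ)/k) - pt2 0 (b * i / k)‖ ∧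
            ‖FKpt a b ta tb ((j:ℝ)/k) ((i:ℝ)/k) - pt2 0 (b * i / k)‖ ≤ C' * a) ∧
          (b / C' ≤ ‖FKpt a b ta tb ((j:ℝ)/k) ((i:ℝ)/k) - pt2 (a * j / k) 0‖ ∧
            ‖FKpt a b ta tb ((j:ℝ)/k) ((i:ℝ)/k) - pt2 (a * j / k) 0‖ ≤ C' * b) ∧
          (Metric.diam (quadK a b ta tb) / C' ≤ ‖pt2 0 (b * i / k) - pt2 (a * j / k) 0‖ ∧
            ‖pt2 0 (b * i / k) - pt2 (a * j / k) 0‖ ≤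
              C' * Metric.diam (quadK a b ta tb)) ∧
          1 / C' ≤ Real.sin (InnerProductGeometry.angle
              (FKpt a b ta tb ((j:ℝ)/k) ((i:ℝ)/k) - pt2 0 (b * i / k))
              (pt2 (a * j / k) 0 - pt2 0 (b * i / k))) := by
  have hk0 : (0 : ℝ) < 1 / k := by
    have : (0 : ℝ) < k := by exact_mod_cast (by omega : 0 < k)
    positivity
  refine ⟨nodeConst (max 1 C ^ 2) (1 / k), nodeConst_pos (by positivity) hk0, ?_⟩
  intro a b ta tb ha hb hta htb hconv hcase i j hi hik hj hjk
  rw [one_lt_div_add_div_iff ha hb] at hconv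
  have hreg := shapeRegular_of_cases hC ha hb hta htb hconv hcase
  simp only [mul_div_assoc]
  exact interior_node_bounds hreg ha hb hta htb hconv hk0 (natCast_div_mem_Icc hj hjk)
    (natCast_div_mem_Icc hi hik)
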